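/- The objective F(p) = pᵀMp is non-decreasing along trajectories of the discrete replicator dynamics: if p' is obtained from p ∈ Δ^n by the replicator update with a nonnegative symmetric matrix M, then F(p') ≥ F(p). (Baum–Eagon inequality for homogeneous quadratic forms.) -/

import Mathlib

/-!
Write `y = M p`, `F = pᵀ y` and `r = √y`. Since `p' = (p ∘ y) / F`, we have
`F(p') = T / F²` with `T = (p ∘ y)ᵀ M (p ∘ y)`, so it suffices to show `F³ ≤ T`.
Let `G = ∑ pᵢ rᵢ³`. Two Cauchy–Schwarz steps give Lyapunov's moment inequality
`F³ = (∑ pᵢ rᵢ²)³ ≤ G²`. By symmetry `G = pᵀ M (p ∘ r)`, and Cauchy–Schwarz with weights `p`,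
then in each row of `M` with weights `Mᵢⱼ pⱼ`, gives
`G² ≤ ∑ pᵢ (M (p ∘ r))ᵢ² ≤ ∑ pᵢ yᵢ (M (p ∘ y))ᵢ = T`.
-/

open Matrix Finset

theorem Finset.sq_sum_mul_le_sum_mul_sum_mul_sq {ι R : Type*} [CommSemiring R] [LinearOrder R]
    [IsStrictOrderedRing R] [ExistsAddOfLE R] (s : Finset ι) {w : ι → R}
    (hw : ∀ i ∈ s, 0 ≤ w i) (b : ι → R) :
    (∑ i ∈ s, w i * b i) ^ 2 ≤ (∑ i ∈ s, w i) * ∑ i ∈ s, w i * b i ^ 2 :=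
  sum_sq_le_sum_mul_sum_of_sq_le_mul s hw (fun i hi => mul_nonneg (hw i hi) (sq_nonneg _))
    fun i _ => (by ring : (w i * b i) ^ 2 = w i * (w i * b i ^ 2)).le

theorem Matrix.IsSymm.dotProduct_mulVec_comm {ι α : Type*} [Fintype ι] [CommSemiring α]
    {M : Matrix ι ι α} (hM : M.IsSymm) (u v : ι → α) : u ⬝ᵥ M *ᵥ v = v ⬝ᵥ M *ᵥ u := by
  rw [dotProduct_mulVec, ← mulVec_transpose, hM.eq, dotProduct_comm]

theorem Matrix.mulVec_mul_apply_sq_le {m ι : Type*} [Fintype ι] {M : Matrix m ι ℝ}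
    (hM : ∀ i j, 0 ≤ M i j) {u : ι → ℝ} (hu : 0 ≤ u) (r : ι → ℝ) (i : m) :
    (M *ᵥ (u * r)) i ^ 2 ≤ (M *ᵥ u) i * (M *ᵥ (u * r ^ 2)) i := by
  simpa only [mulVec, dotProduct, Pi.mul_apply, Pi.pow_apply, mul_assoc] using
    Finset.sq_sum_mul_le_sum_mul_sum_mul_sq univ (fun j _ => mul_nonneg (hM i j) (hu j)) r

section Simplex

variable {ι : Type*} [Fintype ι] {p : ι → ℝ}

theorem sq_sum_mul_le_sum_mul_sq_of_mem_stdSimplex (hp : p ∈ stdSimplex ℝ ι) (b : ι → ℝ) :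
    (∑ i, p i * b i) ^ 2 ≤ ∑ i, p i * b i ^ 2 := by
  simpa [hp.2] using Finset.sq_sum_mul_le_sum_mul_sum_mul_sq univ (fun i _ => hp.1 i) b

theorem pow_three_sum_mul_sq_le_sq_sum_mul_pow_three (hp : p ∈ stdSimplex ℝ ι) {r : ι → ℝ}
    (hr : 0 ≤ r) : (∑ i, p i * r i ^ 2) ^ 3 ≤ (∑ i, p i * r i ^ 3) ^ 2 := by
  set F := ∑ i, p i * r i ^ 2
  set G := ∑ i, p i * r i ^ 3
  set A := ∑ i, p i * r i
  have hA : A ^ 2 ≤ F := sq_sum_mul_le_sum_mul_sq_of_mem_stdSimplex hp r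
  have hFAG : F ^ 2 ≤ A * G := by
    have eF : F = ∑ i, p i * r i * r i := sum_congr rfl fun i _ => by ring
    have eG : G = ∑ i, p i * r i * r i ^ 2 := sum_congr rfl fun i _ => by ring
    rw [eF, eG]
    exact Finset.sq_sum_mul_le_sum_mul_sum_mul_sq univ (fun i _ => mul_nonneg (hp.1 i) (hr i)) r
  have hF0 : 0 ≤ F := sum_nonneg fun i _ => mul_nonneg (hp.1 i) (sq_nonneg (r i))
  rcases hF0.eq_or_lt with hF | hF
  · rw [← hF, zero_pow three_ne_zero]
    exact sq_nonneg G
  · refine le_of_mul_le_mul_left ?_ hF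
    calc F * F ^ 3 = (F ^ 2) ^ 2 := by ring
      _ ≤ (A * G) ^ 2 := pow_le_pow_left₀ (sq_nonneg F) hFAG 2
      _ = A ^ 2 * G ^ 2 := by ring
      _ ≤ F * G ^ 2 := mul_le_mul_of_nonneg_right hA (sq_nonneg G)

theorem dotProduct_mulVec_pow_three_le_of_mem_stdSimplex {M : Matrix ι ι ℝ} (hM : M.IsSymm)
    (hM0 : ∀ i j, 0 ≤ M i j) (hp : p ∈ stdSimplex ℝ ι) :
    (p ⬝ᵥ M *ᵥ p) ^ 3 ≤ (p * M *ᵥ p) ⬝ᵥ M *ᵥ (p * M *ᵥ p) := by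
  set y := M *ᵥ p
  have hy : 0 ≤ y := fun i => sum_nonneg fun j _ => mul_nonneg (hM0 i j) (hp.1 j)
  set r : ι → ℝ := fun i => √(y i)
  have hr : r ^ 2 = y := funext fun i => Real.sq_sqrt (hy i)
  set s := M *ᵥ (p * r)
  have hG : ∑ i, p i * r i ^ 3 = ∑ i, p i * s i :=
    calc ∑ i, p i * r i ^ 3 = (p * r) ⬝ᵥ r ^ 2 := sum_congr rfl fun i _ => by
          simp only [Pi.mul_apply, Pi.pow_apply]; ring
      _ = p ⬝ᵥ s := by rw [hr, hM.dotProduct_mulVec_comm]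
  have hs : ∀ i, s i ^ 2 ≤ y i * (M *ᵥ (p * y)) i := fun i => by
    simpa only [hr] using Matrix.mulVec_mul_apply_sq_le hM0 hp.1 r i
  have hF : p ⬝ᵥ y = ∑ i, p i * r i ^ 2 := by rw [← hr]; rfl
  calc (p ⬝ᵥ y) ^ 3 = (∑ i, p i * r i ^ 2) ^ 3 := by rw [hF]
    _ ≤ (∑ i, p i * r i ^ 3) ^ 2 :=
      pow_three_sum_mul_sq_le_sq_sum_mul_pow_three hp fun i => Real.sqrt_nonneg _
    _ = (∑ i, p i * s i) ^ 2 := by rw [hG]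
    _ ≤ ∑ i, p i * s i ^ 2 := sq_sum_mul_le_sum_mul_sq_of_mem_stdSimplex hp s
    _ ≤ ∑ i, p i * (y i * (M *ᵥ (p * y)) i) := by
      gcongr with i
      · exact hp.1 i
      · exact hs i
    _ = (p * y) ⬝ᵥ M *ᵥ (p * y) := sum_congr rfl fun i _ => (mul_assoc _ _ _).symm

end Simplex

/-- Baum–Eagon inequality: `F(p) = pᵀMp` is non-decreasing along the discrete
replicator dynamics. -/
theorem baum_eagon_nondecreasing (n : ℕ) (M : Matrix (Fin n) (Fin n) ℝ)
    (hsymm : M.IsSymm) (hnonneg : ∀ i j, 0 ≤ M i j)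
    (p : Fin n → ℝ) (hp : p ∈ stdSimplex ℝ (Fin n))
    (hpos : 0 < p ⬝ᵥ M.mulVec p)
    (p' : Fin n → ℝ)
    (hp' : ∀ i, p' i = p i * (M.mulVec p) i / (p ⬝ᵥ M.mulVec p)) :
    p ⬝ᵥ M.mulVec p ≤ p' ⬝ᵥ M.mulVec p' := by
  set F := p ⬝ᵥ M *ᵥ p
  have hp'_eq : p' = F⁻¹ • (p * M *ᵥ p) :=
    funext fun i => by rw [hp' i, div_eq_inv_mul]; rfl
  have hF' : p' ⬝ᵥ M *ᵥ p' = ((p * M *ᵥ p) ⬝ᵥ M *ᵥ (p * M *ᵥ p)) / F ^ 2 := by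
    rw [hp'_eq, mulVec_smul, dotProduct_smul, smul_dotProduct, smul_eq_mul, smul_eq_mul]
    field_simp
  rw [hF', le_div_iff₀ (by positivity)]
  calc F * F ^ 2 = F ^ 3 := by ring
    _ ≤ _ := dotProduct_mulVec_pow_three_le_of_mem_stdSimplex hsymm hnonneg hp
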